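/- arXiv:1811.06275 — 3 statements merged into one kernel-verified Lean document; each statement's English description precedes it below -/
import Mathlib

section
/- Let N ∈ ℕ, let f₁,…,f_N : [0,1] → [0,1] and g₁,…,g_N : [0,1] → ℝ be Lebesgue measurable functions satisfying hypotheses (H₁), (H₂) with constant K, and (H₃), let L be the largest m ∈ {1,…,N} such that some intersection f_{n₁}([0,1]) ∩ ⋯ ∩ f_{n_m}([0,1]) with n₁ < ⋯ < n_m has positive Lebesgue measure, and suppose there exists a real constant C < 1 with |g_n(x)| ≤ (C/(KL)) |f_n'(x)| for all n ∈ {1,…,N} and almost all x ∈ [0,1]. Let P : L¹([0,1]) → L¹([0,1]) be given by Ph = Σ_{n=1}^N g_n·(h∘f_n) and let g ∈ L¹([0,1]). Then the series Σ_{k=0}^∞ P^k g converges in L¹([0,1]), its sum φ₀ is the unique solution in L¹([0,1]) of the equation φ = Pφ + g, and moreover ‖φ₀ − Σ_{k=0}^m P^k g‖ ≤ C^{m+1}/(1−C) · ‖g‖ for every m ∈ ℕ. -/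
open MeasureTheory Filter Set Topology
open scoped Classical

noncomputable abbrev μ01 : MeasureTheory.Measure ℝ := MeasureTheory.volume.restrict (Set.Icc 0 1)

/-- `x` is a Lebesgue density point of the set `S ⊆ ℝ`. -/
def DensityPt (S : Set ℝ) (x : ℝ) : Prop :=
  Tendsto (fun r : ℝ =>
      MeasureTheory.volume (S ∩ Metric.closedBall x r) / MeasureTheory.volume (Metric.closedBall x r))
    (𝓝[>] 0) (𝓝 1)

/-- `h` has the linear map `t ↦ a * t` as approximate differential at `x₀` (relative to `E`). -/
def HasApproxDerivAt (E : Set ℝ) (h : ℝ → ℝ) (a : ℝ) (x₀ : ℝ) : Prop :=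
  ∀ ε > 0, DensityPt {x | x ∈ E ∧ x ≠ x₀ ∧ |h x - h x₀ - a * (x - x₀)| / |x - x₀| < ε} x₀

noncomputable def approxDeriv (E : Set ℝ) (h : ℝ → ℝ) (x : ℝ) : ℝ :=
  if hd : ∃ a, HasApproxDerivAt E h a x then hd.choose else 0

/-!
A measurable function that is approximately differentiable a.e. is Lipschitz on countably many
measurable pieces covering almost all of its domain (a Whitney-type argument with density points).
Extending from each piece, Rademacher's theorem and the density theorem show that `f` is
differentiable along a smaller piece with derivative `f'`, and where `f' ≠ 0` the pieces can be
cut further so that `f` is injective on each. The change of variables formula on these pieces and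
the multiplicity bound `K` give `∫ |f'| φ ∘ f ≤ K ∫_{f([0,1])} φ`. Since almost every point lies in
at most `L` of the images `fₙ([0,1])`, this yields `‖Ph‖ ≤ (C / KL) · K · L · ‖h‖ = C ‖h‖`, and
the Neumann series of the contraction `P` gives the solution and the error bound.
-/

open scoped ENNReal NNReal
open Metric Function

lemma hasApproxDerivAt_approxDeriv {E : Set ℝ} {h : ℝ → ℝ} {x : ℝ}
    (hd : ∃ a, HasApproxDerivAt E h a x) : HasApproxDerivAt E h (approxDeriv E h x) x := by
  rw [approxDeriv, dif_pos hd]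
  exact hd.choose_spec

lemma DensityPt.eventually_ofReal_le {S : Set ℝ} {x : ℝ} (h : DensityPt S x) :
    ∀ᶠ r in 𝓝[>] (0 : ℝ), ENNReal.ofReal (7 / 4 * r) ≤ volume (S ∩ closedBall x r) := by
  have h78 : ENNReal.ofReal (7 / 8) < 1 := by rw [ENNReal.ofReal_lt_one]; norm_num
  filter_upwards [h.eventually_const_lt h78, self_mem_nhdsWithin] with r hr (hr0 : 0 < r)
  have hball : volume (closedBall x r) ≠ 0 := by
    rw [Real.volume_closedBall]; simpa using hr0
  calc ENNReal.ofReal (7 / 4 * r) = ENNReal.ofReal (7 / 8) * volume (closedBall x r) := by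
        rw [Real.volume_closedBall, ← ENNReal.ofReal_mul (by norm_num)]; ring_nf
    _ ≤ volume (S ∩ closedBall x r) :=
        (ENNReal.le_div_iff_mul_le (Or.inl hball) (Or.inl measure_closedBall_lt_top.ne)).1 hr.le

/-- `7/4 * r` is `7/8` of the volume of a ball of radius `r`; the two sets meet because both balls
lie in a ball of volume `2 (r + |x - z|) < 7/4 * r + 7/4 * r`. -/
lemma nonempty_inter_closedBall_of_ofReal_le {S T : Set ℝ} (hT : MeasurableSet T) {x z r : ℝ}
    (hxz : |x - z| < 3 / 4 * r)
    (hS : ENNReal.ofReal (7 / 4 * r) ≤ volume (S ∩ closedBall x r))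
    (hT' : ENNReal.ofReal (7 / 4 * r) ≤ volume (T ∩ closedBall z r)) :
    (S ∩ closedBall x r ∩ (T ∩ closedBall z r)).Nonempty := by
  have hr : 0 < r := by linarith [abs_nonneg (x - z)]
  refine nonempty_inter_of_measure_lt_add volume (hT.inter measurableSet_closedBall)
    (u := closedBall x (r + |x - z|)) ?_ ?_ ?_
  · exact inter_subset_right.trans (closedBall_subset_closedBall (by linarith [abs_nonneg (x - z)]))
  · refine inter_subset_right.trans (closedBall_subset_closedBall' ?_)
    rw [Real.dist_eq, abs_sub_comm]
  · calc volume (closedBall x (r + |x - z|)) = ENNReal.ofReal (2 * (r + |x - z|)) :=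
          Real.volume_closedBall _ _
      _ < ENNReal.ofReal (7 / 4 * r) + ENNReal.ofReal (7 / 4 * r) := by
          rw [← ENNReal.ofReal_add (by positivity) (by positivity),
            ENNReal.ofReal_lt_ofReal_iff (by positivity)]
          linarith
      _ ≤ _ := add_le_add hS hT'

lemma DensityPt.inter_ball {A : Set ℝ} {x : ℝ} (h : DensityPt A x) {δ : ℝ} (hδ : 0 < δ) :
    DensityPt (A ∩ ball x δ) x := by
  refine h.congr' ?_
  filter_upwards [Ioo_mem_nhdsGT hδ] with r hr
  rw [inter_assoc, inter_eq_right.2 (closedBall_subset_ball hr.2)]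

lemma HasApproxDerivAt.eq_of_hasDerivAt {E : Set ℝ} {f F : ℝ → ℝ} {x a b : ℝ}
    (ha : HasApproxDerivAt E f a x) (hF : HasDerivAt F b x) {A : Set ℝ} (hA : MeasurableSet A)
    (hAx : DensityPt A x) (hfF : EqOn f F A) (hxA : x ∈ A) : a = b := by
  by_contra hne
  set ε := |a - b| / 4 with hε_def
  have hε : 0 < ε := by have := abs_pos.2 (sub_ne_zero.2 hne); positivity
  obtain ⟨δ, hδ, hFδ⟩ := Metric.eventually_nhds_iff.1 ((hasDerivAt_iff_isLittleO.1 hF).def hε)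
  obtain ⟨r, hr⟩ := ((ha ε hε).eventually_ofReal_le.and
    ((hAx.inter_ball hδ).eventually_ofReal_le.and self_mem_nhdsWithin)).exists
  obtain ⟨y, ⟨⟨-, hyx, hya⟩, -⟩, ⟨hyA, hyδ⟩, -⟩ :=
    nonempty_inter_closedBall_of_ofReal_le (hA.inter measurableSet_ball) (by simpa using hr.2.2)
      hr.1 hr.2.1
  have hd : 0 < |y - x| := abs_pos.2 (sub_ne_zero.2 hyx)
  have h1 : |f y - f x - a * (y - x)| < ε * |y - x| := (div_lt_iff₀ hd).1 hya
  have h2 : |f y - f x - b * (y - x)| ≤ ε * |y - x| := by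
    have := hFδ (mem_ball.1 hyδ)
    rw [Real.norm_eq_abs, Real.norm_eq_abs, smul_eq_mul, mul_comm] at this
    rwa [hfF hyA, hfF hxA]
  have : |a - b| * |y - x| < 2 * ε * |y - x| := by
    calc |a - b| * |y - x|
        = |(f y - f x - b * (y - x)) - (f y - f x - a * (y - x))| := by rw [← abs_mul]; ring_nf
      _ ≤ |f y - f x - b * (y - x)| + |f y - f x - a * (y - x)| := abs_sub _ _
      _ < 2 * ε * |y - x| := by linarith
  have := lt_of_mul_lt_mul_right this hd.le
  linarith [abs_nonneg (a - b)]

section LipschitzCover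

variable {E : Set ℝ} {f : ℝ → ℝ}

def boundedSlopeSet (E : Set ℝ) (f : ℝ → ℝ) (x M : ℝ) : Set ℝ :=
  {y ∈ E | |f y - f x| ≤ M * |y - x|}

/-- Restricting to rational radii keeps this set measurable. -/
def lipschitzCore (E : Set ℝ) (f : ℝ → ℝ) (M δ : ℝ) : Set ℝ :=
  {x ∈ E | ∀ q : ℚ, 0 < (q : ℝ) → (q : ℝ) ≤ δ →
    ENNReal.ofReal (7 / 4 * q) ≤ volume (boundedSlopeSet E f x M ∩ closedBall x q)}

lemma measurableSet_boundedSlopeSet (hE : MeasurableSet E) (hf : Measurable f) (x M : ℝ) :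
    MeasurableSet (boundedSlopeSet E f x M) :=
  hE.inter (measurableSet_le (hf.sub measurable_const).abs
    (measurable_const.mul (measurable_id.sub measurable_const).abs))

lemma measurableSet_lipschitzCore (hE : MeasurableSet E) (hf : Measurable f) (M δ : ℝ) :
    MeasurableSet (lipschitzCore E f M δ) := by
  have hcore : lipschitzCore E f M δ = E ∩ ⋂ q : ℚ, {x | 0 < (q : ℝ) → (q : ℝ) ≤ δ →
      ENNReal.ofReal (7 / 4 * q) ≤ volume (boundedSlopeSet E f x M ∩ closedBall x q)} := by
    ext x
    simp only [lipschitzCore, mem_ofPred_eq, mem_inter_iff, mem_iInter]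
  rw [hcore]
  refine hE.inter (MeasurableSet.iInter fun q => ?_)
  by_cases hq : 0 < (q : ℝ) ∧ (q : ℝ) ≤ δ
  · have hvol : Measurable fun x => volume (boundedSlopeSet E f x M ∩ closedBall x q) :=
      measurable_measure_prodMk_left (((measurable_snd hE).inter (measurableSet_le
        ((hf.comp measurable_snd).sub (hf.comp measurable_fst)).abs
        (measurable_const.mul (measurable_snd.sub measurable_fst).abs))).inter
        (measurableSet_le (measurable_snd.dist measurable_fst) measurable_const))
    convert measurableSet_le (measurable_const (a := ENNReal.ofReal (7 / 4 * q))) hvol using 1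
    ext x
    simp only [mem_ofPred_eq, hq.1, hq.2, forall_const]
  · simp only [not_and_or, not_lt, not_le] at hq
    convert MeasurableSet.univ
    ext x
    simp only [mem_ofPred_eq, mem_univ, iff_true]
    intro h1 h2
    rcases hq with hq | hq <;> linarith

lemma abs_sub_le_of_mem_lipschitzCore (hE : MeasurableSet E) (hf : Measurable f) {M δ x z : ℝ}
    (hM : 0 ≤ M) (hx : x ∈ lipschitzCore E f M δ) (hz : z ∈ lipschitzCore E f M δ)
    (hxz : |x - z| ≤ δ / 2) : |f x - f z| ≤ 4 * M * |x - z| := by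
  rcases eq_or_ne x z with rfl | hne
  · simp
  have hd : 0 < |x - z| := abs_pos.2 (sub_ne_zero.2 hne)
  obtain ⟨q, hq1, hq2⟩ := exists_rat_btwn (show 4 / 3 * |x - z| < 2 * |x - z| by linarith)
  have hq0 : 0 < (q : ℝ) := by linarith
  obtain ⟨y, ⟨⟨-, hyx⟩, hyxq⟩, ⟨-, hyz⟩, hyzq⟩ :=
    nonempty_inter_closedBall_of_ofReal_le (measurableSet_boundedSlopeSet hE hf z M) (by linarith)
      (hx.2 q hq0 (by linarith)) (hz.2 q hq0 (by linarith))
  rw [mem_closedBall, Real.dist_eq] at hyxq hyzq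
  calc |f x - f z| = |(f y - f z) - (f y - f x)| := by ring_nf
    _ ≤ |f y - f z| + |f y - f x| := abs_sub _ _
    _ ≤ M * q + M * q := add_le_add (hyz.trans (by gcongr)) (hyx.trans (by gcongr))
    _ ≤ 4 * M * |x - z| := by nlinarith

lemma lipschitzOnWith_lipschitzCore_inter_Icc (hE : MeasurableSet E) (hf : Measurable f)
    (M : ℝ≥0) {δ : ℝ} (a : ℝ) :
    LipschitzOnWith (4 * M) f (lipschitzCore E f M δ ∩ Icc a (a + δ / 2)) := by
  refine LipschitzOnWith.of_dist_le_mul fun x hx z hz => ?_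
  rw [Real.dist_eq, Real.dist_eq, NNReal.coe_mul, NNReal.coe_ofNat]
  refine abs_sub_le_of_mem_lipschitzCore hE hf M.2 hx.1 hz.1 ?_
  rw [abs_sub_le_iff]
  constructor <;> linarith [hx.2.1, hx.2.2, hz.2.1, hz.2.2]

lemma exists_mem_lipschitzCore {x a : ℝ} (hx : x ∈ E) (ha : HasApproxDerivAt E f a x) :
    ∃ M m : ℕ, x ∈ lipschitzCore E f M (1 / (m + 1)) := by
  obtain ⟨M, hM⟩ := exists_nat_ge (|a| + 1)
  have hsub : {y | y ∈ E ∧ y ≠ x ∧ |f y - f x - a * (y - x)| / |y - x| < 1} ⊆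
      boundedSlopeSet E f x M := by
    rintro y ⟨hyE, hyx, hy⟩
    rw [div_lt_one (abs_pos.2 (sub_ne_zero.2 hyx))] at hy
    refine ⟨hyE, ?_⟩
    calc |f y - f x| = |(f y - f x - a * (y - x)) + a * (y - x)| := by ring_nf
      _ ≤ |f y - f x - a * (y - x)| + |a * (y - x)| := abs_add_le _ _
      _ ≤ (|a| + 1) * |y - x| := by rw [abs_mul]; linarith
      _ ≤ M * |y - x| := by gcongr
  obtain ⟨δ, hδ, hδsub⟩ := mem_nhdsGT_iff_exists_Ioo_subset.1 (ha 1 one_pos).eventually_ofReal_le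
  obtain ⟨m, hm⟩ := exists_nat_one_div_lt hδ.out
  refine ⟨M, m, hx, fun q hq0 hqm => (hδsub ⟨hq0, hqm.trans_lt hm⟩).trans ?_⟩
  exact measure_mono (inter_subset_inter_left _ hsub)

theorem exists_lipschitzOnWith_cover (hE : MeasurableSet E) (hf : Measurable f) :
    ∃ T : ℕ → Set ℝ, (∀ i, MeasurableSet (T i)) ∧ (∀ i, T i ⊆ E) ∧
      (∀ i, ∃ c, LipschitzOnWith c f (T i)) ∧
      {x ∈ E | ∃ a, HasApproxDerivAt E f a x} ⊆ ⋃ i, T i := by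
  set T' : ℕ × ℕ × ℤ → Set ℝ := fun p =>
    lipschitzCore E f p.1 (1 / (p.2.1 + 1)) ∩
      Icc (p.2.2 * (1 / (p.2.1 + 1) / 2)) (p.2.2 * (1 / (p.2.1 + 1) / 2) + 1 / (p.2.1 + 1) / 2)
  obtain ⟨e, he⟩ := exists_surjective_nat (ℕ × ℕ × ℤ)
  refine ⟨T' ∘ e, fun i => (measurableSet_lipschitzCore hE hf _ _).inter measurableSet_Icc,
    fun i => inter_subset_left.trans (sep_subset _ _),
    fun i => ⟨_, lipschitzOnWith_lipschitzCore_inter_Icc hE hf (e i).1 _⟩, ?_⟩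
  rintro x ⟨hxE, a, ha⟩
  obtain ⟨M, m, hx⟩ := exists_mem_lipschitzCore hxE ha
  set w : ℝ := 1 / (m + 1) / 2
  have hw : 0 < w := by positivity
  obtain ⟨i, hi⟩ := he (M, m, ⌊x / w⌋)
  refine mem_iUnion.2 ⟨i, ?_⟩
  simp only [Function.comp_apply, hi, T']
  refine ⟨by exact_mod_cast hx, ?_, ?_⟩
  · rw [← le_div_iff₀ hw]; exact Int.floor_le _
  · have := (div_lt_iff₀ hw).1 (Int.lt_floor_add_one (x / w))
    exact (this.trans_eq (add_one_mul _ _)).le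

end LipschitzCover

lemma exists_measurableSet_subset_of_ae_restrict {α : Type*} [MeasurableSpace α] {μ : Measure α}
    {T : Set α} (hT : MeasurableSet T) {p : α → Prop} (h : ∀ᵐ x ∂μ.restrict T, p x) :
    ∃ G ⊆ T, MeasurableSet G ∧ (∀ x ∈ G, p x) ∧ μ (T \ G) = 0 := by
  have hnull : μ ({x | ¬p x} ∩ T) = 0 := by rwa [ae_iff, Measure.restrict_apply' hT] at h
  refine ⟨T \ toMeasurable μ ({x | ¬p x} ∩ T), sdiff_subset,
    hT.diff (measurableSet_toMeasurable _ _), fun x hx => ?_, ?_⟩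
  · by_contra hpx
    exact hx.2 (subset_toMeasurable _ _ ⟨hpx, hx.1⟩)
  · refine measure_mono_null (fun x hx => ?_) ((measure_toMeasurable _).trans hnull)
    by_contra hxN
    exact hx.2 ⟨hx.1, hxN⟩

section DerivCover

variable {E : Set ℝ} {f : ℝ → ℝ}

/-- Extending `f` from each Lipschitz piece, Rademacher's theorem and the density theorem identify
the approximate derivative with the derivative of the extension almost everywhere on the piece. -/
theorem exists_hasDerivWithinAt_cover (hE : MeasurableSet E) (hf : Measurable f)
    (hdiff : ∀ᵐ x ∂volume.restrict E, ∃ a, HasApproxDerivAt E f a x) :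
    ∃ (G : ℕ → Set ℝ) (D : ℕ → ℝ → ℝ), (∀ i, MeasurableSet (G i)) ∧ (∀ i, G i ⊆ E) ∧
      (∀ i, Measurable (D i)) ∧
      (∀ i, ∀ x ∈ G i, D i x = approxDeriv E f x ∧ HasDerivWithinAt f (D i x) (G i) x) ∧
      volume (E \ ⋃ i, G i) = 0 := by
  obtain ⟨T, hTm, hTE, hTlip, hTcover⟩ := exists_lipschitzOnWith_cover hE hf
  choose c hc using hTlip
  choose F hFlip hfF using fun i => (hc i).extend_real
  have hgood : ∀ i, ∀ᵐ x ∂volume.restrict (T i),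
      DifferentiableAt ℝ (F i) x ∧ deriv (F i) x = approxDeriv E f x := by
    intro i
    filter_upwards [Besicovitch.ae_tendsto_measure_inter_div volume (T i),
      ae_restrict_of_ae (hFlip i).ae_differentiableAt, ae_restrict_mem (hTm i),
      ae_restrict_of_ae_restrict_of_subset (hTE i) hdiff] with x hdens hdF hxT hxa
    exact ⟨hdF, ((hasApproxDerivAt_approxDeriv hxa).eq_of_hasDerivAt hdF.hasDerivAt (hTm i) hdens
      (hfF i) hxT).symm⟩
  choose G hGT hGm hGgood hGnull using fun i => exists_measurableSet_subset_of_ae_restrict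
    (hTm i) (hgood i)
  refine ⟨G, fun i => deriv (F i), hGm, fun i => (hGT i).trans (hTE i),
    fun i => measurable_deriv (F i), fun i x hx => ⟨(hGgood i x hx).2, ?_⟩, ?_⟩
  · exact (hGgood i x hx).1.hasDerivAt.hasDerivWithinAt.congr
      (fun y hy => hfF i (hGT i hy)) (hfF i (hGT i hx))
  · have hE' : volume {x ∈ E | ¬∃ a, HasApproxDerivAt E f a x} = 0 := by
      rw [ae_restrict_iff' hE, ae_iff] at hdiff
      exact measure_mono_null (fun x hx => Classical.not_imp.2 hx) hdiff
    refine measure_mono_null ?_ (measure_union_null hE' (measure_iUnion_null hGnull))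
    rintro x ⟨hxE, hxG⟩
    by_cases hxa : ∃ a, HasApproxDerivAt E f a x
    · obtain ⟨i, hi⟩ := mem_iUnion.1 (hTcover ⟨hxE, hxa⟩)
      exact Or.inr (mem_iUnion.2 ⟨i, hi, fun h => hxG (mem_iUnion.2 ⟨i, h⟩)⟩)
    · exact Or.inl ⟨hxE, hxa⟩

end DerivCover

lemma ApproximatesLinearOn.injOn_of_lt {𝕜 E F : Type*} [NontriviallyNormedField 𝕜]
    [NormedAddCommGroup E] [NormedSpace 𝕜 E] [NormedAddCommGroup F] [NormedSpace 𝕜 F]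
    {f : E → F} {A : E →L[𝕜] F} {s : Set E} {c : ℝ≥0} {k : ℝ}
    (hf : ApproximatesLinearOn f A s c) (hA : ∀ v, k * ‖v‖ ≤ ‖A v‖) (hc : c < k) :
    InjOn f s := by
  intro x hx y hy hxy
  have h := hf x hx y hy
  rw [hxy, sub_self, zero_sub, norm_neg] at h
  by_contra hne
  have := norm_pos_iff.2 (sub_ne_zero.2 hne)
  nlinarith [hA (x - y)]

/-- `f` is injective where it stays within `‖A‖ / 2` of a linear map `A ≠ 0`. -/
theorem exists_injOn_cover_of_hasDerivWithinAt {s : Set ℝ} {f f' : ℝ → ℝ} (hs : MeasurableSet s)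
    (hf : ∀ x ∈ s, HasDerivWithinAt f (f' x) s x) (h0 : ∀ x ∈ s, f' x ≠ 0) :
    ∃ t : ℕ → Set ℝ, (∀ n, MeasurableSet (t n) ∧ t n ⊆ s ∧ InjOn f (t n)) ∧ s ⊆ ⋃ n, t n := by
  obtain ⟨t, A, -, htm, hst, happrox, hA⟩ :=
    exists_partition_approximatesLinearOn_of_hasFDerivWithinAt f s
      (fun x => ContinuousLinearMap.toSpanSingleton ℝ (f' x))
      (fun x hx => (hf x hx).hasFDerivWithinAt)
      (fun A => if A 1 = 0 then 1 else ‖A 1‖₊ / 2) (fun A => by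
        split_ifs with h
        exacts [one_ne_zero, by simpa using h])
  refine ⟨fun n => s ∩ t n, fun n => ⟨hs.inter (htm n), inter_subset_left, ?_⟩, fun x hx => ?_⟩
  · rcases s.eq_empty_or_nonempty with rfl | hne
    · simp
    obtain ⟨y, hy, hAy⟩ := hA hne n
    have hA1 : A n 1 ≠ 0 := by simpa [hAy] using h0 y hy
    have happ := happrox n
    rw [if_neg hA1] at happ
    refine happ.injOn_of_lt (k := ‖A n 1‖) (fun v => ?_) ?_
    · have hv : A n v = v * A n 1 := by rw [← smul_eq_mul, ← map_smul, smul_eq_mul, mul_one]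
      rw [hv, norm_mul, mul_comm]
    · have := norm_pos_iff.2 hA1
      simp only [NNReal.coe_div, coe_nnnorm, NNReal.coe_ofNat]
      linarith
  · obtain ⟨n, hn⟩ := mem_iUnion.1 (hst hx)
    exact mem_iUnion.2 ⟨n, hx, hn⟩

section InjCover

variable {E : Set ℝ} {f : ℝ → ℝ}

theorem exists_injOn_decomposition (hE : MeasurableSet E) (hf : Measurable f)
    (hdiff : ∀ᵐ x ∂volume.restrict E, ∃ a, HasApproxDerivAt E f a x) :
    ∃ R : ℕ → Set ℝ, Pairwise (Disjoint on R) ∧ (∀ i, MeasurableSet (R i)) ∧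
      (∀ i, R i ⊆ E) ∧ (∀ i, InjOn f (R i)) ∧
      (∀ i, ∀ x ∈ R i, HasDerivWithinAt f (approxDeriv E f x) (R i) x) ∧
      ∀ᵐ x ∂volume.restrict E, approxDeriv E f x ≠ 0 → x ∈ ⋃ i, R i := by
  obtain ⟨G, D, hGm, hGE, hDm, hGD, hnull⟩ := exists_hasDerivWithinAt_cover hE hf hdiff
  choose t ht hst using fun i => exists_injOn_cover_of_hasDerivWithinAt
    ((hGm i).inter (hDm i (measurableSet_singleton 0)).compl)
    (fun x hx => (hGD i x hx.1).2.mono inter_subset_left) (fun x hx => hx.2)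
  set u : ℕ → Set ℝ := fun k => t k.unpair.1 k.unpair.2
  have hu : ∀ k, u k ⊆ G k.unpair.1 ∩ {x | D k.unpair.1 x ≠ 0} := fun k => (ht _ _).2.1
  refine ⟨disjointed u, disjoint_disjointed u, MeasurableSet.disjointed fun k => (ht _ _).1,
    fun k => (disjointed_subset u k).trans ((hu k).trans (inter_subset_left.trans (hGE _))),
    fun k => (ht _ _).2.2.mono (disjointed_subset u k), fun k x hx => ?_, ?_⟩
  · have hxG := (hu k (disjointed_subset u k hx)).1
    rw [← (hGD _ x hxG).1]
    exact (hGD _ x hxG).2.mono ((disjointed_subset u k).trans ((hu k).trans inter_subset_left))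
  · filter_upwards [ae_restrict_of_ae (measure_eq_zero_iff_ae_notMem.1 hnull),
      ae_restrict_mem hE] with x hxG hxE hx0
    obtain ⟨i, hi⟩ := mem_iUnion.1 (not_not.1 fun h => hxG ⟨hxE, h⟩)
    obtain ⟨n, hn⟩ := mem_iUnion.1 (hst i ⟨hi, by simpa [(hGD i x hi).1] using hx0⟩)
    rw [iUnion_disjointed]
    exact mem_iUnion.2 ⟨Nat.pair i n, by simpa [u] using hn⟩

end InjCover

lemma tsum_indicator_image_le {α β : Type*} {f : α → β} {E : Set α} {R : ℕ → Set α}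
    (hR : Pairwise (Disjoint on R)) (hRE : ∀ i, R i ⊆ E) {y : β} {K : ℕ}
    (hy : (E ∩ f ⁻¹' {y}).encard ≤ K) :
    ∑' i, (f '' R i).indicator 1 y ≤ (K : ℝ≥0∞) := by
  rcases isEmpty_or_nonempty α with hα | hα
  · simp [eq_empty_of_isEmpty]
  have hpre : ∀ i ∈ {i | y ∈ f '' R i}, ∃ x ∈ R i, f x = y := fun i hi => hi
  choose! v hvR hvy using hpre
  have hinj : InjOn v {i | y ∈ f '' R i} := fun i hi j hj hij => by
    by_contra hne
    exact (hR hne).le_bot ⟨hvR i hi, hij ▸ hvR j hj⟩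
  calc ∑' i, (f '' R i).indicator 1 y = ∑' i, {i | y ∈ f '' R i}.indicator 1 i := by
        congr 1
    _ = ({i | y ∈ f '' R i}.encard : ℝ≥0∞) := by
        rw [← ENNReal.tsum_set_one, ← tsum_subtype]
        rfl
    _ ≤ (E ∩ f ⁻¹' {y}).encard := by
        gcongr
        exact encard_le_encard_of_injOn (fun i hi => ⟨hRE i (hvR i hi), hvy i hi⟩) hinj
    _ ≤ K := by exact_mod_cast hy

section AreaFormula

variable {E : Set ℝ} {f : ℝ → ℝ}

theorem exists_lintegral_abs_approxDeriv_mul_comp_le (hE : MeasurableSet E) (hf : Measurable f)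
    (hdiff : ∀ᵐ x ∂volume.restrict E, ∃ a, HasApproxDerivAt E f a x) {K : ℕ}
    (hK : ∀ᵐ y, (E ∩ f ⁻¹' {y}).encard ≤ K) :
    ∃ M ⊆ f '' E, MeasurableSet M ∧ ∀ φ : ℝ → ℝ≥0∞, Measurable φ →
      ∫⁻ x in E, ENNReal.ofReal |approxDeriv E f x| * φ (f x) ≤ K * ∫⁻ y in M, φ y := by
  obtain ⟨R, hRdisj, hRm, hRE, hRinj, hRderiv, hRcover⟩ := exists_injOn_decomposition hE hf hdiff
  have hRim : ∀ i, MeasurableSet (f '' R i) := fun i =>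
    (hRm i).image_of_measurable_injOn hf (hRinj i)
  refine ⟨⋃ i, f '' R i, iUnion_subset fun i => image_mono (hRE i), MeasurableSet.iUnion hRim,
    fun φ hφ => ?_⟩
  set ψ : ℝ → ℝ≥0∞ := fun x => ENNReal.ofReal |approxDeriv E f x| * φ (f x)
  have hmult : ∀ᵐ y, ∑' i, (f '' R i).indicator φ y ≤ K * (⋃ i, f '' R i).indicator φ y := by
    filter_upwards [hK] with y hy
    calc ∑' i, (f '' R i).indicator φ y
        = ∑' i, (f '' R i).indicator 1 y * (⋃ i, f '' R i).indicator φ y := by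
          refine tsum_congr fun i => ?_
          by_cases hyi : y ∈ f '' R i
          · have hyM : y ∈ ⋃ j, f '' R j := mem_iUnion.2 ⟨i, hyi⟩
            simp [hyi, hyM]
          · simp [hyi]
      _ ≤ K * (⋃ i, f '' R i).indicator φ y := by
          rw [ENNReal.tsum_mul_right]
          gcongr
          exact tsum_indicator_image_le hRdisj hRE hy
  calc ∫⁻ x in E, ψ x ≤ ∫⁻ x in E, (⋃ i, R i).indicator ψ x := by
        refine lintegral_mono_ae ?_
        filter_upwards [hRcover] with x hx
        by_cases hD : approxDeriv E f x = 0
        · simp [ψ, hD]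
        · rw [indicator_of_mem (hx hD)]
    _ ≤ ∫⁻ x in ⋃ i, R i, ψ x := by
        rw [← lintegral_indicator (MeasurableSet.iUnion hRm)]
        exact setLIntegral_le_lintegral _ _
    _ = ∑' i, ∫⁻ y in f '' R i, φ y := by
        rw [lintegral_iUnion hRm hRdisj]
        exact tsum_congr fun i =>
          (lintegral_image_eq_lintegral_abs_deriv_mul (hRm i) (hRderiv i) (hRinj i) φ).symm
    _ = ∫⁻ y, ∑' i, (f '' R i).indicator φ y := by
        rw [lintegral_tsum fun i => (hφ.indicator (hRim i)).aemeasurable]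
        exact tsum_congr fun i => (lintegral_indicator (hRim i) _).symm
    _ ≤ K * ∫⁻ y in ⋃ i, f '' R i, φ y := by
        rw [← lintegral_indicator (MeasurableSet.iUnion hRim), ← lintegral_const_mul' _ _
          (ENNReal.natCast_ne_top K)]
        exact lintegral_mono_ae hmult

theorem volume_image_eq_zero_of_ae_approxDeriv_eq_zero (hE : MeasurableSet E) (hf : Measurable f)
    (hdiff : ∀ᵐ x ∂volume.restrict E, ∃ a, HasApproxDerivAt E f a x)
    (hN : ∀ A ⊆ E, volume A = 0 → volume (f '' A) = 0)
    (hD : ∀ᵐ x ∂volume.restrict E, approxDeriv E f x = 0) : volume (f '' E) = 0 := by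
  obtain ⟨G, D, hGm, hGE, -, hGD, hnull⟩ := exists_hasDerivWithinAt_cover hE hf hdiff
  refine measure_mono_null (image_mono (subset_sdiff_union E (⋃ i, G i))) ?_
  rw [image_union, image_iUnion]
  refine measure_union_null (hN _ sdiff_subset hnull) (measure_iUnion_null fun i => ?_)
  refine le_antisymm ((addHaar_image_le_lintegral_abs_det_fderiv volume (hGm i)
    fun x hx => (hGD i x hx).2.hasFDerivWithinAt).trans (le_of_eq ?_)) zero_le
  refine (lintegral_congr_ae ?_).trans lintegral_zero
  filter_upwards [ae_restrict_of_ae_restrict_of_subset (hGE i) hD, ae_restrict_mem (hGm i)]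
    with x hx hxG
  rw [ContinuousLinearMap.det_toSpanSingleton, (hGD i x hxG).1, hx]
  simp

lemma nonneg_of_ae_abs_le_mul_abs_approxDeriv (hE : MeasurableSet E) (hf : Measurable f)
    (hdiff : ∀ᵐ x ∂volume.restrict E, ∃ a, HasApproxDerivAt E f a x)
    (hN : ∀ A ⊆ E, volume A = 0 → volume (f '' A) = 0) (himage : volume (f '' E) ≠ 0)
    {g : ℝ → ℝ} {c : ℝ} (h : ∀ᵐ x ∂volume.restrict E, |g x| ≤ c * |approxDeriv E f x|) :
    0 ≤ c := by
  by_contra! hc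
  refine himage (volume_image_eq_zero_of_ae_approxDeriv_eq_zero hE hf hdiff hN ?_)
  filter_upwards [h] with x hx
  exact abs_eq_zero.1 (le_antisymm (by nlinarith [abs_nonneg (g x)]) (abs_nonneg _))

end AreaFormula

lemma ae_sum_indicator_le {ι α : Type*} [Fintype ι] [MeasurableSpace α] {μ : Measure α}
    {M : ι → Set α} {L : ℕ} (h : ∀ s : Finset ι, L < s.card → μ (⋂ n ∈ s, M n) = 0) :
    ∀ᵐ y ∂μ, ∑ n, (M n).indicator 1 y ≤ (L : ℝ≥0∞) := by
  have hae : ∀ᵐ y ∂μ, ∀ s : Finset ι, L < s.card → y ∉ ⋂ n ∈ s, M n := by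
    refine ae_all_iff.2 fun s => ?_
    by_cases hs : L < s.card
    · filter_upwards [measure_eq_zero_iff_ae_notMem.1 (h s hs)] with y hy using fun _ => hy
    · exact Eventually.of_forall fun y h => absurd h hs
  filter_upwards [hae] with y hy
  have hcard := hy (Finset.univ.filter fun n => y ∈ M n)
  simp only [mem_iInter₂, Finset.mem_filter, Finset.mem_univ, true_and, imp_self] at hcard
  simpa [indicator_apply, Finset.sum_boole] using hcard

lemma lintegral_sum_mul_comp_le {ι α β : Type*} [Fintype ι] [MeasurableSpace α]
    [MeasurableSpace β] {μ : Measure α} {ν : Measure β} {f : ι → α → β} {w v : ι → α → ℝ≥0∞}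
    {M : ι → Set β} {S : Set β} {c K : ℝ≥0∞} {L : ℕ} (hc : c ≠ ⊤) (hf : ∀ n, Measurable (f n))
    (hw : ∀ n, Measurable (w n)) (hM : ∀ n, MeasurableSet (M n)) (hS : MeasurableSet S)
    (hMS : ∀ n, M n ⊆ S) (hwv : ∀ n, ∀ᵐ x ∂μ, w n x ≤ c * v n x)
    (harea : ∀ n φ, Measurable φ → ∫⁻ x, v n x * φ (f n x) ∂μ ≤ K * ∫⁻ y in M n, φ y ∂ν)
    (hmult : ∀ᵐ y ∂ν, ∑ n, (M n).indicator 1 y ≤ (L : ℝ≥0∞)) {φ : β → ℝ≥0∞}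
    (hφ : Measurable φ) :
    ∫⁻ x, ∑ n, w n x * φ (f n x) ∂μ ≤ c * K * L * ∫⁻ y in S, φ y ∂ν := by
  have hMφ : ∀ n y, (M n).indicator 1 y * S.indicator φ y = (M n).indicator φ y := fun n y => by
    by_cases hy : y ∈ M n
    · simp [hy, hMS n hy]
    · simp [hy]
  calc ∫⁻ x, ∑ n, w n x * φ (f n x) ∂μ = ∑ n, ∫⁻ x, w n x * φ (f n x) ∂μ :=
        lintegral_finsetSum _ fun n _ => (hw n).mul (hφ.comp (hf n))
    _ ≤ ∑ n, c * ∫⁻ x, v n x * φ (f n x) ∂μ := by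
        refine Finset.sum_le_sum fun n _ => ?_
        rw [← lintegral_const_mul' _ _ hc]
        refine lintegral_mono_ae ?_
        filter_upwards [hwv n] with x hx
        rw [← mul_assoc]
        gcongr
    _ ≤ ∑ n, c * (K * ∫⁻ y in M n, φ y ∂ν) := by gcongr with n; exact harea n φ hφ
    _ = c * K * ∫⁻ y, ∑ n, (M n).indicator 1 y * S.indicator φ y ∂ν := by
        simp_rw [hMφ]
        rw [lintegral_finsetSum _ fun n _ => hφ.indicator (hM n), Finset.mul_sum]
        simp_rw [lintegral_indicator (hM _), mul_assoc]
    _ ≤ c * K * ∫⁻ y, L * S.indicator φ y ∂ν := by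
        gcongr 1
        refine lintegral_mono_ae ?_
        filter_upwards [hmult] with y hy
        rw [← Finset.sum_mul]
        gcongr
    _ = c * K * L * ∫⁻ y in S, φ y ∂ν := by
        rw [lintegral_const_mul' _ _ (ENNReal.natCast_ne_top L), lintegral_indicator hS]
        ring

lemma Lp.norm_le_of_ae_eq_sum_mul_comp {ι : Type*} [Fintype ι] {μ : Measure ℝ} {f g : ι → ℝ → ℝ}
    {u h : Lp ℝ 1 μ} (hu : u =ᵐ[μ] fun x => ∑ n, g n x * h (f n x)) {C : ℝ} (hC : 0 ≤ C)
    (hest : ∀ φ : ℝ → ℝ≥0∞, Measurable φ →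
      ∫⁻ x, ∑ n, ‖g n x‖ₑ * φ (f n x) ∂μ ≤ ENNReal.ofReal C * ∫⁻ y, φ y ∂μ) :
    ‖u‖ ≤ C * ‖h‖ := by
  rw [Lp.norm_def]
  refine ENNReal.toReal_le_of_le_ofReal (by positivity) ?_
  rw [ENNReal.ofReal_mul hC, ofReal_norm, Lp.enorm_def, eLpNorm_congr_ae hu,
    eLpNorm_one_eq_lintegral_enorm, eLpNorm_one_eq_lintegral_enorm]
  calc ∫⁻ x, ‖∑ n, g n x * h (f n x)‖ₑ ∂μ ≤ ∫⁻ x, ∑ n, ‖g n x‖ₑ * ‖h (f n x)‖ₑ ∂μ :=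
        lintegral_mono fun x => (enorm_sum_le _ _).trans (by simp only [enorm_mul, le_refl])
    _ ≤ _ := hest _ (Lp.stronglyMeasurable h).measurable.enorm

theorem ContinuousLinearMap.neumann_series_of_norm_apply_le {E : Type*} [NormedAddCommGroup E]
    [NormedSpace ℝ E] [CompleteSpace E] (P : E →L[ℝ] E) {C : ℝ} (hC0 : 0 ≤ C) (hC1 : C < 1)
    (hP : ∀ u, ‖P u‖ ≤ C * ‖u‖) (g : E) :
    ∃ φ₀ : E,
      Tendsto (fun m => ∑ k ∈ Finset.range (m + 1), (P ^ k) g) atTop (𝓝 φ₀) ∧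
      φ₀ = P φ₀ + g ∧
      (∀ φ : E, φ = P φ + g → φ = φ₀) ∧
      ∀ m : ℕ, ‖φ₀ - ∑ k ∈ Finset.range (m + 1), (P ^ k) g‖ ≤ C ^ (m + 1) / (1 - C) * ‖g‖ := by
  have hpow : ∀ k u, ‖(P ^ k) u‖ ≤ C ^ k * ‖u‖ := by
    intro k
    induction k with
    | zero => simp
    | succ k ih =>
      intro u
      rw [pow_succ, mul_apply_eq_comp]
      calc ‖(P ^ k) (P u)‖ ≤ C ^ k * (C * ‖u‖) := (ih _).trans (by gcongr; exact hP u)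
        _ = C ^ (k + 1) * ‖u‖ := by ring
  have hgeom : Summable fun k => C ^ k * ‖g‖ :=
    (summable_geometric_of_lt_one hC0 hC1).mul_right _
  have hsum : Summable fun k => (P ^ k) g := Summable.of_norm_bounded hgeom fun k => hpow k g
  have hfix : ∑' k, (P ^ k) g = P (∑' k, (P ^ k) g) + g := by
    rw [P.map_tsum hsum, hsum.tsum_eq_zero_add, pow_zero, one_apply_eq_self, add_comm]
    simp only [pow_succ', mul_apply_eq_comp]
  refine ⟨∑' k, (P ^ k) g, hsum.hasSum.tendsto_sum_nat.comp (tendsto_add_atTop_nat 1), hfix,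
    fun φ hφ => ?_, fun m => ?_⟩
  · have hd : ‖φ - ∑' k, (P ^ k) g‖ ≤ C * ‖φ - ∑' k, (P ^ k) g‖ := by
      conv_lhs => rw [hφ, hfix, add_sub_add_right_eq_sub, ← map_sub]
      exact hP _
    have := norm_nonneg (φ - ∑' k, (P ^ k) g)
    exact sub_eq_zero.1 (norm_eq_zero.1 (by nlinarith))
  · rw [← hsum.sum_add_tsum_nat_add (m + 1), add_sub_cancel_left]
    have htail : Summable fun k => C ^ (k + (m + 1)) * ‖g‖ := (summable_nat_add_iff _).2 hgeom
    calc ‖∑' k, (P ^ (k + (m + 1))) g‖ ≤ ∑' k, C ^ (k + (m + 1)) * ‖g‖ :=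
          tsum_of_norm_bounded htail.hasSum fun k => hpow _ g
      _ = C ^ (m + 1) / (1 - C) * ‖g‖ := by
          have hk : ∀ k, C ^ (k + (m + 1)) * ‖g‖ = C ^ (m + 1) * ‖g‖ * C ^ k := fun k => by ring
          rw [tsum_congr hk, tsum_mul_left, tsum_geometric_of_lt_one hC0 hC1]
          ring

lemma ae_encard_inter_preimage_le {E : Set ℝ} {f : ℝ → ℝ} (hf : MapsTo f E E) {K : ℕ}
    (h : volume {y ∈ E | (K : ℕ∞) < (E ∩ f ⁻¹' {y}).encard} = 0) :
    ∀ᵐ y, (E ∩ f ⁻¹' {y}).encard ≤ K := by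
  filter_upwards [measure_eq_zero_iff_ae_notMem.1 h] with y hy
  by_cases hyE : y ∈ E
  · exact not_lt.1 fun hK => hy ⟨hyE, hK⟩
  · have : E ∩ f ⁻¹' {y} = ∅ := eq_empty_of_forall_notMem fun x hx => hyE (hx.2 ▸ hf hx.1)
    simp [this]

lemma ae_restrict_of_measure_sep_not_eq_zero {α : Type*} [MeasurableSpace α] {μ : Measure α}
    {s : Set α} {p : α → Prop} (hs : MeasurableSet s) (h : μ {x ∈ s | ¬p x} = 0) :
    ∀ᵐ x ∂μ.restrict s, p x := by
  rw [ae_restrict_iff' hs]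
  filter_upwards [measure_eq_zero_iff_ae_notMem.1 h] with x hx hxs
  exact not_not.1 fun h => hx ⟨hxs, h⟩

lemma one_le_of_ae_encard_le {E : Set ℝ} {f : ℝ → ℝ} {K : ℕ}
    (hK : ∀ᵐ y, (E ∩ f ⁻¹' {y}).encard ≤ K) (h : volume (f '' E) ≠ 0) : 1 ≤ K := by
  by_contra! hK0
  refine h (measure_eq_zero_iff_ae_notMem.2 ?_)
  filter_upwards [hK] with y hy ⟨x, hx, hxy⟩
  rw [Nat.lt_one_iff.1 hK0, Nat.cast_zero, nonpos_iff_eq_zero, encard_eq_zero] at hy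
  exact hy.subset ⟨hx, hxy⟩

section IsGreatest

variable {α : Type*} [MeasurableSpace α] {μ : Measure α} {N L : ℕ} {A : Fin N → Set α}

lemma exists_measure_ne_zero_of_isGreatest (hL : IsGreatest {m : ℕ | 1 ≤ m ∧ m ≤ N ∧
      ∃ s : Finset (Fin N), s.card = m ∧ 0 < μ (⋂ n ∈ s, A n)} L) :
    ∃ n, μ (A n) ≠ 0 := by
  obtain ⟨hL1, -, s, hs, hspos⟩ := hL.1
  obtain ⟨n, hn⟩ := Finset.card_pos.1 (hs ▸ hL1)
  exact ⟨n, (hspos.trans_le (measure_mono (biInter_subset_of_mem hn))).ne'⟩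

lemma measure_biInter_eq_zero_of_isGreatest (hL : IsGreatest {m : ℕ | 1 ≤ m ∧ m ≤ N ∧
      ∃ s : Finset (Fin N), s.card = m ∧ 0 < μ (⋂ n ∈ s, A n)} L)
    {s : Finset (Fin N)} (hs : L < s.card) : μ (⋂ n ∈ s, A n) = 0 := by
  by_contra h
  have := hL.2 ⟨by omega, s.card_le_univ.trans (by simp), s, rfl, pos_iff_ne_zero.2 h⟩
  omega

end IsGreatest

theorem stmt9_general (N : ℕ) (f g' : Fin N → ℝ → ℝ)
    (hfmeas : ∀ n, Measurable (f n)) (hgmeas : ∀ n, Measurable (g' n))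
    (hmaps : ∀ n, MapsTo (f n) (Icc 0 1) (Icc 0 1))
    (H1diff : ∀ n,
      MeasureTheory.volume {x ∈ Icc (0 : ℝ) 1 | ¬∃ a, HasApproxDerivAt (Icc 0 1) (f n) a x} = 0)
    (H1LuzinN : ∀ n, ∀ A ⊆ Icc (0 : ℝ) 1,
      MeasureTheory.volume A = 0 → MeasureTheory.volume (f n '' A) = 0)
    (K : ℕ)
    (H2 : ∀ n,
      MeasureTheory.volume {y ∈ Icc (0 : ℝ) 1 | (K : ℕ∞) < (Icc (0 : ℝ) 1 ∩ f n ⁻¹' {y}).encard} = 0)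
    (L : ℕ)
    (hL : IsGreatest {m : ℕ | 1 ≤ m ∧ m ≤ N ∧
      ∃ s : Finset (Fin N), s.card = m ∧
        0 < MeasureTheory.volume (⋂ n ∈ s, f n '' Icc (0 : ℝ) 1)} L)
    -- |gₙ(x)| ≤ (C/(KL)) |fₙ'(x)| a.e., with C < 1
    (C : ℝ) (hC1 : C < 1)
    (hC : ∀ n, ∀ᵐ x ∂μ01,
      |g' n x| ≤ C / ((K : ℝ) * (L : ℝ)) * |approxDeriv (Icc 0 1) (f n) x|)
    -- P is the operator given by Ph = Σₙ gₙ · (h ∘ fₙ)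
    (P : Lp ℝ 1 μ01 →L[ℝ] Lp ℝ 1 μ01)
    (hP : ∀ h : Lp ℝ 1 μ01,
      (P h : ℝ → ℝ) =ᵐ[μ01] fun x => ∑ n, g' n x * (h : ℝ → ℝ) (f n x))
    (g : Lp ℝ 1 μ01) :
    ∃ φ₀ : Lp ℝ 1 μ01,
      Tendsto (fun m => ∑ k ∈ Finset.range (m + 1), (P ^ k) g) atTop (𝓝 φ₀) ∧
      φ₀ = P φ₀ + g ∧
      (∀ φ : Lp ℝ 1 μ01, φ = P φ + g → φ = φ₀) ∧
      ∀ m : ℕ, ‖φ₀ - ∑ k ∈ Finset.range (m + 1), (P ^ k) g‖ ≤ C ^ (m + 1) / (1 - C) * ‖g‖ := by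
  have hdiff := fun n => ae_restrict_of_measure_sep_not_eq_zero measurableSet_Icc (H1diff n)
  have hmultK := fun n => ae_encard_inter_preimage_le (hmaps n) (H2 n)
  choose M hMf hMm hMarea using fun n =>
    exists_lintegral_abs_approxDeriv_mul_comp_le measurableSet_Icc (hfmeas n) (hdiff n) (hmultK n)
  obtain ⟨n₀, hn₀⟩ := exists_measure_ne_zero_of_isGreatest hL
  have hK : 1 ≤ K := one_le_of_ae_encard_le (hmultK n₀) hn₀
  have hKL : (0 : ℝ) < K * L := by have := hL.1.1; positivity
  have hC0 : 0 ≤ C := by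
    have := nonneg_of_ae_abs_le_mul_abs_approxDeriv measurableSet_Icc (hfmeas n₀) (hdiff n₀)
      (H1LuzinN n₀) hn₀ (hC n₀)
    exact (div_le_div_iff_of_pos_right hKL).1 (by rwa [zero_div])
  have hmult : ∀ᵐ y, ∑ n, (M n).indicator 1 y ≤ (L : ℝ≥0∞) := ae_sum_indicator_le fun s hs =>
    measure_mono_null (iInter₂_mono fun n _ => hMf n) (measure_biInter_eq_zero_of_isGreatest hL hs)
  have hw : ∀ n, ∀ᵐ x ∂μ01, ‖g' n x‖ₑ ≤
      ENNReal.ofReal (C / (K * L)) * ENNReal.ofReal |approxDeriv (Icc 0 1) (f n) x| := fun n => by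
    filter_upwards [hC n] with x hx
    rw [Real.enorm_eq_ofReal_abs, ← ENNReal.ofReal_mul (by positivity)]
    exact ENNReal.ofReal_le_ofReal hx
  have hcoef : ENNReal.ofReal (C / (K * L)) * K * L = ENNReal.ofReal C := by
    rw [mul_assoc, ← ENNReal.ofReal_natCast, ← ENNReal.ofReal_natCast,
      ← ENNReal.ofReal_mul (by positivity), ← ENNReal.ofReal_mul (by positivity),
      div_mul_cancel₀ _ hKL.ne']
  refine P.neumann_series_of_norm_apply_le hC0 hC1
    (fun h => Lp.norm_le_of_ae_eq_sum_mul_comp (hP h) hC0 fun φ hφ => ?_) g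
  rw [← hcoef]
  exact lintegral_sum_mul_comp_le ENNReal.ofReal_ne_top hfmeas (fun n => (hgmeas n).enorm) hMm
    measurableSet_Icc (fun n => (hMf n).trans (hmaps n).image_subset) hw hMarea hmult hφ

theorem stmt9 (N : ℕ) (f g' : Fin N → ℝ → ℝ)
    (hfmeas : ∀ n, Measurable (f n)) (hgmeas : ∀ n, Measurable (g' n))
    (hmaps : ∀ n, MapsTo (f n) (Icc 0 1) (Icc 0 1))
    (H1diff : ∀ n,
      MeasureTheory.volume {x ∈ Icc (0 : ℝ) 1 | ¬∃ a, HasApproxDerivAt (Icc 0 1) (f n) a x} = 0)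
    (H1LuzinN : ∀ n, ∀ A ⊆ Icc (0 : ℝ) 1,
      MeasureTheory.volume A = 0 → MeasureTheory.volume (f n '' A) = 0)
    (K : ℕ)
    (H2 : ∀ n,
      MeasureTheory.volume {y ∈ Icc (0 : ℝ) 1 | (K : ℕ∞) < (Icc (0 : ℝ) 1 ∩ f n ⁻¹' {y}).encard} = 0)
    (H3 : ∀ n, ∀ A : Set ℝ,
      MeasureTheory.volume A = 0 → MeasureTheory.volume (Icc (0 : ℝ) 1 ∩ f n ⁻¹' A) = 0)
    (L : ℕ)
    (hL : IsGreatest {m : ℕ | 1 ≤ m ∧ m ≤ N ∧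
      ∃ s : Finset (Fin N), s.card = m ∧
        0 < MeasureTheory.volume (⋂ n ∈ s, f n '' Icc (0 : ℝ) 1)} L)
    -- |gₙ(x)| ≤ (C/(KL)) |fₙ'(x)| a.e., with C < 1
    (C : ℝ) (hC1 : C < 1)
    (hC : ∀ n, ∀ᵐ x ∂μ01,
      |g' n x| ≤ C / ((K : ℝ) * (L : ℝ)) * |approxDeriv (Icc 0 1) (f n) x|)
    -- P is the operator given by Ph = Σₙ gₙ · (h ∘ fₙ)
    (P : Lp ℝ 1 μ01 →L[ℝ] Lp ℝ 1 μ01)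
    (hP : ∀ h : Lp ℝ 1 μ01,
      (P h : ℝ → ℝ) =ᵐ[μ01] fun x => ∑ n, g' n x * (h : ℝ → ℝ) (f n x))
    (g : Lp ℝ 1 μ01) :
    ∃ φ₀ : Lp ℝ 1 μ01,
      Tendsto (fun m => ∑ k ∈ Finset.range (m + 1), (P ^ k) g) atTop (𝓝 φ₀) ∧
      φ₀ = P φ₀ + g ∧
      (∀ φ : Lp ℝ 1 μ01, φ = P φ + g → φ = φ₀) ∧
      ∀ m : ℕ, ‖φ₀ - ∑ k ∈ Finset.range (m + 1), (P ^ k) g‖ ≤ C ^ (m + 1) / (1 - C) * ‖g‖ :=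
  stmt9_general N f g' hfmeas hgmeas hmaps H1diff H1LuzinN K H2 L hL C hC1 hC P hP g
end

section
/- Let ε ∈ (0,1/2). Then the constant function 1/ε is, up to equality almost everywhere, the unique φ ∈ L¹([0,1]) satisfying φ(x) = ((1−ε)/2)·φ(x/2) + ((1−ε)/2)·φ((x+1)/2) + 1 for almost every x ∈ [0,1]. -/
open MeasureTheory Filter Set Topology

/-- The constant function with value `c`, as an element of `L¹([0,1])`. -/
noncomputable def constL1 (c : ℝ) : Lp ℝ 1 μ01 :=
  (MeasureTheory.memLp_const c).toLp fun _ : ℝ => c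

/-!
The two maps `x ↦ x / 2` and `x ↦ (x + 1) / 2` carry `[0,1]` onto its two halves, each doubling
Lebesgue measure, so `∫ G(x/2) + ∫ G((x+1)/2) = 2 ∫ G` over `[0,1]`. The constant `1/ε` solves
the equation, and the difference `ψ = φ - 1/ε` of any solution satisfies
`ψ(x) = (1-ε)/2 · (ψ(x/2) + ψ((x+1)/2))`. Integrating `|ψ|` gives `‖ψ‖₁ ≤ (1-ε) ‖ψ‖₁`,
hence `ψ = 0` in `L¹`.
-/

open scoped ENNReal

theorem Real.map_volume_add_div_two (t : ℝ) :
    volume.map (fun x : ℝ => (x + t) / 2) = (2 : ℝ≥0∞) • volume := by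
  have hcomp : (fun x : ℝ => (x + t) / 2) = (· * 2⁻¹) ∘ (· + t) := by
    funext x; simp [div_eq_mul_inv]
  rw [hcomp, ← Measure.map_map (by fun_prop) (by fun_prop), map_add_right_eq_self,
    Real.map_volume_mul_right (by norm_num)]
  norm_num

theorem Real.map_volume_restrict_Icc_add_div_two (t a b : ℝ) :
    (volume.restrict (Icc a b)).map (fun x : ℝ => (x + t) / 2) =
      (2 : ℝ≥0∞) • volume.restrict (Icc ((a + t) / 2) ((b + t) / 2)) := by
  have hpre : (fun x : ℝ => (x + t) / 2) ⁻¹' Icc ((a + t) / 2) ((b + t) / 2) = Icc a b := by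
    ext x
    simp only [mem_preimage, mem_Icc]
    constructor <;> rintro ⟨h₁, h₂⟩ <;> constructor <;> linarith
  rw [← hpre, ← Measure.restrict_map (by fun_prop) measurableSet_Icc, Real.map_volume_add_div_two,
    Measure.restrict_smul]

theorem map_div_two_add_map_add_one_div_two :
    μ01.map (· / 2) + μ01.map (fun x => (x + 1) / 2) = (2 : ℝ≥0∞) • μ01 := by
  have h₀ := Real.map_volume_restrict_Icc_add_div_two 0 0 1
  have h₁ := Real.map_volume_restrict_Icc_add_div_two 1 0 1
  simp only [add_zero, zero_div] at h₀
  norm_num at h₁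
  have hdisj : AEDisjoint volume (Icc (0 : ℝ) (1 / 2)) (Icc (1 / 2) 1) := by
    refine measure_mono_null (fun x hx => ?_) (Real.volume_singleton (a := 1 / 2))
    exact le_antisymm hx.1.2 hx.2.1
  rw [h₀, h₁, ← smul_add, ← Measure.restrict_union₀ hdisj measurableSet_Icc.nullMeasurableSet,
    Icc_union_Icc_eq_Icc (by norm_num) (by norm_num)]

theorem quasiMeasurePreserving_div_two : Measure.QuasiMeasurePreserving (· / 2 : ℝ → ℝ) μ01 μ01 :=
  ⟨by fun_prop, Measure.absolutelyContinuous_of_le_smul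
    (map_div_two_add_map_add_one_div_two ▸ Measure.le_add_right le_rfl)⟩

theorem quasiMeasurePreserving_add_one_div_two :
    Measure.QuasiMeasurePreserving (fun x : ℝ => (x + 1) / 2) μ01 μ01 :=
  ⟨by fun_prop, Measure.absolutelyContinuous_of_le_smul
    (map_div_two_add_map_add_one_div_two ▸ Measure.le_add_left le_rfl)⟩

theorem lintegral_comp_div_two_add_lintegral_comp_add_one_div_two {G : ℝ → ℝ≥0∞}
    (hG : Measurable G) :
    ∫⁻ x, G (x / 2) ∂μ01 + ∫⁻ x, G ((x + 1) / 2) ∂μ01 = 2 * ∫⁻ x, G x ∂μ01 := by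
  rw [← lintegral_map hG (by fun_prop : Measurable fun x : ℝ => x / 2),
    ← lintegral_map hG (by fun_prop : Measurable fun x : ℝ => (x + 1) / 2),
    ← lintegral_add_measure, map_div_two_add_map_add_one_div_two, lintegral_smul_measure,
    smul_eq_mul]

theorem ae_eq_zero_of_le_mul_comp_add_comp {G : ℝ → ℝ≥0∞} {r : ℝ≥0∞} (hG : Measurable G)
    (hG_fin : ∫⁻ x, G x ∂μ01 ≠ ∞) (hr : 2 * r < 1)
    (hle : ∀ᵐ x ∂μ01, G x ≤ r * (G (x / 2) + G ((x + 1) / 2))) : G =ᵐ[μ01] 0 := by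
  set I := ∫⁻ x, G x ∂μ01
  have hI : I ≤ 2 * r * I :=
    calc I ≤ ∫⁻ x, r * (G (x / 2) + G ((x + 1) / 2)) ∂μ01 := lintegral_mono_ae hle
      _ = r * (2 * I) := by
        rw [lintegral_const_mul _ (by fun_prop), lintegral_add_left (by fun_prop),
          lintegral_comp_div_two_add_lintegral_comp_add_one_div_two hG]
      _ = 2 * r * I := by ring
  have hI0 : I = 0 := by
    by_contra hne
    exact (ENNReal.mul_lt_of_lt_div (by simpa [ENNReal.div_self hne hG_fin] using hr)).not_ge hI
  exact (lintegral_eq_zero_iff hG).1 hI0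

theorem ae_eq_zero_of_eq_mul_comp_add_mul_comp {f : ℝ → ℝ} {a : ℝ} (hf : Measurable f)
    (hf_int : Integrable f μ01) (ha : 2 * |a| < 1)
    (hfix : ∀ᵐ x ∂μ01, f x = a * f (x / 2) + a * f ((x + 1) / 2)) : f =ᵐ[μ01] 0 := by
  have hr : 2 * ‖a‖ₑ < 1 := by
    rw [Real.enorm_eq_ofReal_abs, ← ENNReal.ofReal_ofNat 2, ← ENNReal.ofReal_mul (by norm_num),
      ENNReal.ofReal_lt_one]
    exact ha
  have hle : ∀ᵐ x ∂μ01, ‖f x‖ₑ ≤ ‖a‖ₑ * (‖f (x / 2)‖ₑ + ‖f ((x + 1) / 2)‖ₑ) := by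
    filter_upwards [hfix] with x hx
    rw [hx, mul_add, ← enorm_mul, ← enorm_mul]
    exact enorm_add_le _ _
  filter_upwards [ae_eq_zero_of_le_mul_comp_add_comp hf.enorm hf_int.hasFiniteIntegral.ne hr hle]
    with x hx
  exact enorm_eq_zero.1 hx

theorem stmt14 (ε : ℝ) (hε : ε ∈ Ioo (0 : ℝ) (1 / 2)) :
    ∀ φ : Lp ℝ 1 μ01,
      (∀ᵐ x ∂μ01, (φ : ℝ → ℝ) x =
          (1 - ε) / 2 * (φ : ℝ → ℝ) (x / 2) + (1 - ε) / 2 * (φ : ℝ → ℝ) ((x + 1) / 2) + 1) ↔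
        φ = constL1 (1 / ε) := by
  obtain ⟨hε₀, hε₂⟩ := hε
  intro φ
  have hconst : (constL1 (1 / ε) : ℝ → ℝ) =ᵐ[μ01] fun _ => 1 / ε := MemLp.coeFn_toLp _
  constructor
  · intro hφ
    have hfix : ∀ᵐ x ∂μ01, φ x - 1 / ε =
        (1 - ε) / 2 * (φ (x / 2) - 1 / ε) + (1 - ε) / 2 * (φ ((x + 1) / 2) - 1 / ε) := by
      filter_upwards [hφ] with x hx
      rw [hx]
      field_simp
      ring
    have hzero := ae_eq_zero_of_eq_mul_comp_add_mul_comp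
      ((Lp.stronglyMeasurable φ).measurable.sub_const _)
      ((L1.integrable_coeFn φ).sub (integrable_const _))
      (by rw [abs_of_pos (by linarith)]; linarith) hfix
    refine Lp.ext (EventuallyEq.trans ?_ hconst.symm)
    filter_upwards [hzero] with x hx
    exact sub_eq_zero.1 hx
  · rintro rfl
    filter_upwards [hconst, quasiMeasurePreserving_div_two.ae hconst,
      quasiMeasurePreserving_add_one_div_two.ae hconst] with x hx hx₀ hx₁
    rw [hx, hx₀, hx₁]
    field_simp
    ring
end

section
/- Consider the equation φ(x) = (1/2)·φ(x/2) + (1/2)·φ((x+1)/2) + b on [0,1]. If b ≠ 0, then this equation has no solution φ ∈ L¹([0,1]) (in the almost-everywhere sense). If b = 0, then every solution φ ∈ L¹([0,1]) of this equation is almost everywhere equal to a constant function, and conversely every constant function is a solution. -/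
/-!
Pairing the equation with `e_n(x) = exp(-2πinx)` and substituting `y = x/2`, `y = (x+1)/2` shows
that the Fourier coefficients of a solution satisfy `c_n = c_{2n} + b δ_{n0}`. At `n = 0` this
forces `b = 0`. For `n ≠ 0` it gives `c_n = c_{2^k n}` for all `k`, and the Riemann–Lebesgue lemma
makes this tend to `0`. An integrable function on the circle whose nonconstant Fourier coefficients
vanish is a.e. constant, since trigonometric polynomials are dense in the continuous functions.
-/

open MeasureTheory Filter Set Topology

open FourierTransform BoundedContinuousFunction

theorem MeasureTheory.Integrable.ae_eq_zero_of_forall_integral_smul_eq_zero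
    {X E : Type*} [PseudoEMetricSpace X] [MeasurableSpace X] [BorelSpace X]
    [NormedAddCommGroup E] [NormedSpace ℝ E] [CompleteSpace E] {μ : Measure X} {F : X → E}
    (hF : Integrable F μ) (h : ∀ g : X →ᵇ ℝ, ∫ x, g x • F x ∂μ = 0) :
    F =ᵐ[μ] 0 := by
  refine ae_eq_zero_of_forall_setIntegral_isClosed_eq_zero hF fun s hs => ?_
  have hδ (n : ℕ) : (0 : ℝ) < 1 / (n + 1) := Nat.one_div_pos_of_nat
  set g : ℕ → X →ᵇ ℝ := fun n =>
    (thickenedIndicator (hδ n) s).comp _ (isometry_subtype_coe (s := {r : ℝ | 0 ≤ r})).lipschitz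
  have hg (n : ℕ) (x : X) : g n x = thickenedIndicator (hδ n) s x := rfl
  have hg_le (n : ℕ) (x : X) : ‖g n x‖ ≤ 1 := by
    rw [hg, Real.norm_of_nonneg (NNReal.coe_nonneg _)]
    exact_mod_cast thickenedIndicator_le_one (hδ n) s x
  have hg_lim (x : X) : Tendsto (fun n => g n x) atTop (𝓝 (s.indicator 1 x)) := by
    have := tendsto_pi_nhds.1 (thickenedIndicator_tendsto_indicator_closure hδ
      tendsto_one_div_add_atTop_nhds_zero_nat s) x
    rw [hs.closure_eq] at this
    convert (NNReal.continuous_coe.tendsto _).comp this using 2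
    · exact hg _ x
    · by_cases hx : x ∈ s <;> simp [hx]
  have hlim := tendsto_integral_of_dominated_convergence (fun x => ‖F x‖)
    (F := fun n x => g n x • F x)
    (fun n => (g n).continuous.aestronglyMeasurable.smul hF.1) hF.norm
    (fun n => ae_of_all _ fun x => by
      rw [norm_smul]; exact mul_le_of_le_one_left (norm_nonneg _) (hg_le n x))
    (ae_of_all _ fun x => (hg_lim x).smul_const (F x))
  simp only [h, ← indicator_smul_const_apply, Pi.one_apply, one_smul] at hlim
  rw [← integral_indicator hs.measurableSet]
  exact (tendsto_nhds_unique tendsto_const_nhds hlim).symm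

namespace AddCircle

variable {T : ℝ} [hT : Fact (0 < T)]

theorem integrable_liftIoc {E : Type*} [NormedAddCommGroup E] {a : ℝ} {f : ℝ → E}
    (hf : IntegrableOn f (Ioc a (a + T))) : Integrable (liftIoc T a f) haarAddCircle := by
  have : Integrable (liftIoc T a f) :=
    ((measurePreserving_subtype_coe measurableSet_Ioc).comp
      (measurePreserving_equivIoc T)).integrable_comp_of_integrable hf
  rwa [volume_eq_smul_haarAddCircle,
    integrable_smul_measure (by simpa using hT.out) ENNReal.ofReal_ne_top] at this

theorem ae_eq_of_liftIoc_ae_eq {E : Type*} {a : ℝ} {f : ℝ → E} {c : E}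
    (h : liftIoc T a f =ᵐ[haarAddCircle] fun _ => c) :
    f =ᵐ[volume.restrict (Ioc a (a + T))] fun _ => c := by
  have hvol : liftIoc T a f =ᵐ[volume] fun _ => c := by
    rw [volume_eq_smul_haarAddCircle]
    exact Measure.ae_smul_measure h _
  filter_upwards [(AddCircle.measurePreserving_mk T a).quasiMeasurePreserving.ae hvol,
    ae_restrict_mem measurableSet_Ioc] with x hx hmem
  rwa [liftIoc_coe_apply hmem] at hx

variable {E : Type*} [NormedAddCommGroup E] [NormedSpace ℂ E]

theorem fourierCoeff_liftIoc_eq_intervalIntegral {a : ℝ} (f : ℝ → E) (n : ℤ) :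
    fourierCoeff (liftIoc T a f) n =
      (1 / T) • ∫ x in a..a + T, fourier (-n) (x : AddCircle T) • f x := by
  rw [fourierCoeff_eq_intervalIntegral _ _ a]
  congr 1
  refine intervalIntegral.integral_congr_ae (ae_of_all _ fun x hx => ?_)
  rw [uIoc_of_le (by linarith [hT.out])] at hx
  rw [liftIoc_coe_apply hx]

theorem fourierCoeff_eq_fourier_indicator (F : AddCircle T → E) (n : ℤ) :
    fourierCoeff F n = (1 / T) • 𝓕 ((Ioc 0 T).indicator fun x : ℝ => F x) (n / T) := by
  rw [fourierCoeff_eq_intervalIntegral F n 0, Real.fourier_real_eq_integral_exp_smul, zero_add,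
    intervalIntegral.integral_of_le hT.out.le, ← integral_indicator measurableSet_Ioc]
  congr 2 with x
  by_cases hx : x ∈ Ioc 0 T
  · simp only [indicator_of_mem hx, fourier_coe_apply]
    congr 2
    push_cast
    field_simp
  · simp [indicator_of_notMem hx]

theorem tendsto_fourierCoeff_cofinite (F : AddCircle T → E) :
    Tendsto (fourierCoeff F) cofinite (𝓝 0) := by
  have hfreq : Tendsto (fun n : ℤ => (n : ℝ) / T) cofinite (cocompact ℝ) :=
    (Homeomorph.mulRight₀ T⁻¹ (inv_ne_zero hT.out.ne')).isClosedEmbedding.tendsto_cocompact.comp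
      Int.tendsto_coe_cofinite
  have := ((Real.zero_at_infty_fourier ((Ioc 0 T).indicator fun x : ℝ => F x)).comp
    hfreq).const_smul (1 / T)
  rw [smul_zero] at this
  exact this.congr fun n => (fourierCoeff_eq_fourier_indicator F n).symm

variable [CompleteSpace E]

theorem fourierCoeff_const (c : E) (n : ℤ) :
    fourierCoeff (fun _ : AddCircle T => c) n = if n = 0 then c else 0 := by
  have h := congr_fun (fourierCoeff_fourier (T := T) 0) n
  simp only [fourierCoeff, fourier_zero, smul_eq_mul, mul_one] at h
  rw [fourierCoeff, integral_smul_const, h, Pi.single_apply]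
  split_ifs <;> simp

theorem ae_eq_zero_of_fourierCoeff_eq_zero {F : AddCircle T → E}
    (hF : Integrable F haarAddCircle) (h : ∀ n, fourierCoeff F n = 0) :
    F =ᵐ[haarAddCircle] 0 := by
  have hint (g : C(AddCircle T, ℂ)) : Integrable (fun t => g t • F t) haarAddCircle :=
    hF.bdd_smul ‖g‖ g.continuous.aestronglyMeasurable (ae_of_all _ g.norm_coe_le_norm)
  let L : C(AddCircle T, ℂ) →ₗ[ℂ] E :=
    { toFun g := ∫ t, g t • F t ∂haarAddCircle
      map_add' g g' := by
        simp only [ContinuousMap.add_apply, add_smul]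
        exact integral_add (hint g) (hint g')
      map_smul' c g := by
        simp only [ContinuousMap.smul_apply, smul_assoc, RingHom.id_apply]
        exact integral_smul c _ }
  have hL : Continuous L := by
    refine AddMonoidHomClass.continuous_of_bound L (∫ t, ‖F t‖ ∂haarAddCircle) fun g => ?_
    rw [mul_comm, ← integral_const_mul]
    refine norm_integral_le_of_norm_le (hF.norm.const_mul _) (ae_of_all _ fun t => ?_)
    rw [norm_smul]
    exact mul_le_mul_of_nonneg_right (g.norm_coe_le_norm t) (norm_nonneg _)
  have hspan : Submodule.span ℂ (range fourier) ≤ LinearMap.ker L :=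
    Submodule.span_le.2 <| range_subset_iff.2 fun n =>
      show ∫ t, fourier n t • F t ∂haarAddCircle = 0 by
        simpa only [fourierCoeff, neg_neg] using h (-n)
  have hL_zero (g : C(AddCircle T, ℂ)) : L g = 0 := by
    have := Submodule.topologicalClosure_minimal _ hspan (isClosed_singleton.preimage hL)
    rw [span_fourier_closure_eq_top] at this
    exact this Submodule.mem_top
  refine hF.ae_eq_zero_of_forall_integral_smul_eq_zero fun g => ?_
  simp only [← Complex.coe_smul]
  exact hL_zero ⟨fun t => (g t : ℂ), by fun_prop⟩

theorem ae_eq_fourierCoeff_zero_of_fourierCoeff_eq_zero {F : AddCircle T → E}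
    (hF : Integrable F haarAddCircle) (h : ∀ n ≠ 0, fourierCoeff F n = 0) :
    F =ᵐ[haarAddCircle] fun _ => fourierCoeff F 0 := by
  have hG : Integrable (fun t => F t - fourierCoeff F 0) haarAddCircle :=
    hF.sub (integrable_const _)
  have hcoeff (n : ℤ) : fourierCoeff (fun t => F t - fourierCoeff F 0) n = 0 := by
    have hsplit : fourierCoeff (fun t => F t - fourierCoeff F 0) n =
        fourierCoeff F n - fourierCoeff (fun _ : AddCircle T => fourierCoeff F 0) n := by
      simp only [fourierCoeff, smul_sub]
      exact integral_sub (hF.fourier_smul _) ((integrable_const _).fourier_smul _)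
    rw [hsplit, fourierCoeff_const]
    split_ifs with hn
    · rw [hn, sub_self]
    · rw [h n hn, sub_zero]
  filter_upwards [ae_eq_zero_of_fourierCoeff_eq_zero hG hcoeff] with t ht
  exact sub_eq_zero.1 ht

end AddCircle

theorem fourier_two_mul_coe_div_two {T : ℝ} (n : ℤ) (y : ℝ) :
    fourier (2 * n) ((y / 2 : ℝ) : AddCircle T) = fourier n (y : AddCircle T) := by
  rw [fourier_apply, fourier_apply, mul_comm, mul_zsmul, two_zsmul, ← QuotientAddGroup.mk_add,
    add_halves]

theorem quasiMeasurePreserving_add_div_two {c : ℝ} (hc : c ∈ Icc (0 : ℝ) 1) :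
    Measure.QuasiMeasurePreserving (fun x => (x + c) / 2) μ01 μ01 := by
  have hvol : Measure.QuasiMeasurePreserving (fun x : ℝ => (x + c) / 2) := by
    convert (Measure.quasiMeasurePreserving_smul volume (r := 2⁻¹) (by norm_num)).comp
      (measurePreserving_add_right volume c).quasiMeasurePreserving using 1
    ext x
    simp [smul_eq_mul, div_eq_inv_mul]
  refine hvol.restrict fun x hx => ?_
  constructor <;> linarith [hx.1, hx.2, hc.1, hc.2]

section DoublingTransfer

variable {E : Type*} [NormedAddCommGroup E]

/-- The transfer operator of the doubling map `x ↦ 2x mod 1` on `[0, 1]`: the equation of the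
theorem reads `φ = doublingTransfer φ + b`. -/
noncomputable def doublingTransfer [NormedSpace ℝ E] (f : ℝ → E) (x : ℝ) : E :=
  (2⁻¹ : ℝ) • (f (x / 2) + f ((x + 1) / 2))

theorem IntervalIntegrable.comp_div_two_and_comp_add_one_div_two {f : ℝ → E}
    (hf : IntervalIntegrable f volume 0 1) :
    IntervalIntegrable (fun x => f (x / 2)) volume 0 1 ∧
      IntervalIntegrable (fun x => f ((x + 1) / 2)) volume 0 1 := by
  have h₁ : IntervalIntegrable (fun x => f (x / 2)) volume 0 2 := by
    simpa [div_eq_inv_mul] using hf.comp_mul_left (c := 2⁻¹)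
  have h₂ : IntervalIntegrable (fun x => f ((x + 1) / 2)) volume (-1) 1 := by
    simpa [show (2 : ℝ) - 1 = 1 by norm_num] using h₁.comp_add_right 1
  exact ⟨h₁.mono_set (uIcc_subset_uIcc (by simp) (by simp)),
    h₂.mono_set (uIcc_subset_uIcc (by simp) (by simp))⟩

variable [NormedSpace ℝ E]

theorem IntervalIntegrable.doublingTransfer {f : ℝ → E} (hf : IntervalIntegrable f volume 0 1) :
    IntervalIntegrable (doublingTransfer f) volume 0 1 :=
  let ⟨h₁, h₂⟩ := hf.comp_div_two_and_comp_add_one_div_two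
  (h₁.add h₂).smul _

theorem intervalIntegral_doublingTransfer [CompleteSpace E] {f : ℝ → E}
    (hf : IntervalIntegrable f volume 0 1) :
    ∫ x in (0 : ℝ)..1, doublingTransfer f x = ∫ x in (0 : ℝ)..1, f x := by
  obtain ⟨h₁, h₂⟩ := hf.comp_div_two_and_comp_add_one_div_two
  simp only [doublingTransfer]
  rw [intervalIntegral.integral_smul, intervalIntegral.integral_add h₁ h₂,
    intervalIntegral.integral_comp_div _ two_ne_zero]
  simp_rw [add_div _ (1 : ℝ) 2]
  rw [intervalIntegral.integral_comp_div_add _ two_ne_zero, ← smul_add, smul_smul,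
    inv_mul_cancel₀ two_ne_zero, one_smul, zero_div, zero_add, add_halves]
  exact intervalIntegral.integral_add_adjacent_intervals
    (hf.mono_set (uIcc_subset_uIcc (by simp) (by norm_num)))
    (hf.mono_set (uIcc_subset_uIcc (by norm_num) (by simp)))

theorem ae_eq_doublingTransfer_of_ae_eq_const {f : ℝ → E} {c : E}
    (h : f =ᵐ[μ01] fun _ => c) : ∀ᵐ x ∂μ01, f x = doublingTransfer f x := by
  filter_upwards [h, (quasiMeasurePreserving_add_div_two (c := 0) (by simp)).ae h,
    (quasiMeasurePreserving_add_div_two (c := 1) (by simp)).ae h] with x hx h₀ h₁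
  rw [add_zero] at h₀
  rw [doublingTransfer, hx, h₀, h₁, ← two_smul ℝ c, smul_smul, inv_mul_cancel₀ two_ne_zero,
    one_smul]

end DoublingTransfer

section DoublingEquation

variable {E : Type*} [NormedAddCommGroup E] [NormedSpace ℂ E]

theorem doublingTransfer_fourier_smul (f : ℝ → E) (n : ℤ) (x : ℝ) :
    doublingTransfer (fun y => fourier (2 * n) (y : AddCircle (1 : ℝ)) • f y) x =
      fourier n (x : AddCircle (1 : ℝ)) • doublingTransfer f x := by
  have hcoe : ((x + 1 : ℝ) : AddCircle (1 : ℝ)) = x := by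
    rw [QuotientAddGroup.mk_add, AddCircle.coe_period, add_zero]
  simp only [doublingTransfer, fourier_two_mul_coe_div_two, hcoe, ← smul_add]
  exact smul_comm _ _ _

variable [CompleteSpace E]

theorem fourierCoeff_liftIoc_eq_fourierCoeff_two_mul_add {f : ℝ → E} {b : E}
    (hf : Integrable f μ01) (h : ∀ᵐ x ∂μ01, f x = doublingTransfer f x + b)
    (n : ℤ) :
    fourierCoeff (AddCircle.liftIoc 1 0 f) n =
      fourierCoeff (AddCircle.liftIoc 1 0 f) (2 * n) + if n = 0 then b else 0 := by
  rw [← AddCircle.fourierCoeff_const (T := 1) b n,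
    AddCircle.fourierCoeff_liftIoc_eq_intervalIntegral,
    AddCircle.fourierCoeff_liftIoc_eq_intervalIntegral, fourierCoeff_eq_intervalIntegral _ _ 0]
  simp only [zero_add, div_one, one_smul]
  set g : ℝ → E := fun y => fourier (2 * -n) (y : AddCircle (1 : ℝ)) • f y
  have hg : IntervalIntegrable g volume 0 1 :=
    ((intervalIntegrable_iff_integrableOn_Icc_of_le zero_le_one).2 hf).continuousOn_smul
      (by fun_prop)
  calc ∫ x in (0 : ℝ)..1, fourier (-n) (x : AddCircle (1 : ℝ)) • f x
      = ∫ x in (0 : ℝ)..1, (doublingTransfer g x + fourier (-n) (x : AddCircle (1 : ℝ)) • b) := by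
        refine intervalIntegral.integral_congr_ae ?_
        filter_upwards [ae_imp_of_ae_restrict h] with x hx hmem
        rw [uIoc_of_le zero_le_one] at hmem
        rw [hx (Ioc_subset_Icc_self hmem), smul_add, doublingTransfer_fourier_smul]
    _ = (∫ x in (0 : ℝ)..1, g x) + ∫ x in (0 : ℝ)..1, fourier (-n) (x : AddCircle (1 : ℝ)) • b := by
        rw [intervalIntegral.integral_add hg.doublingTransfer
          (Continuous.intervalIntegrable (by fun_prop) _ _), intervalIntegral_doublingTransfer hg]
    _ = _ := by simp only [g, mul_neg]

theorem eq_zero_of_ae_eq_doublingTransfer_add {f : ℝ → E} {b : E}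
    (hf : Integrable f μ01) (h : ∀ᵐ x ∂μ01, f x = doublingTransfer f x + b) :
    b = 0 := by
  simpa using fourierCoeff_liftIoc_eq_fourierCoeff_two_mul_add hf h 0

theorem fourierCoeff_liftIoc_eq_zero_of_ae_eq_doublingTransfer {f : ℝ → E}
    (hf : Integrable f μ01) (h : ∀ᵐ x ∂μ01, f x = doublingTransfer f x)
    {n : ℤ} (hn : n ≠ 0) : fourierCoeff (AddCircle.liftIoc 1 0 f) n = 0 := by
  set c := fourierCoeff (AddCircle.liftIoc 1 0 f)
  have hdouble (m : ℤ) : c m = c (2 * m) := by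
    have := fourierCoeff_liftIoc_eq_fourierCoeff_two_mul_add hf
      (h.mono fun x hx => by rw [hx, add_zero]) m
    rwa [ite_self, add_zero] at this
  have hiter (k : ℕ) : c (2 ^ k * n) = c n := by
    induction k with
    | zero => simp
    | succ k ih => rw [pow_succ', mul_assoc, ← hdouble, ih]
  have hfreq : Tendsto (fun k : ℕ => 2 ^ k * n) atTop cofinite := by
    rw [← Nat.cofinite_eq_atTop]
    exact Function.Injective.tendsto_cofinite fun k l hkl =>
      Int.pow_right_injective (by norm_num) (mul_right_cancel₀ hn hkl)
  exact tendsto_nhds_unique (tendsto_const_nhds.congr fun k => (hiter k).symm)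
    ((AddCircle.tendsto_fourierCoeff_cofinite _).comp hfreq)

theorem exists_ae_eq_const_of_ae_eq_doublingTransfer {f : ℝ → E}
    (hf : Integrable f μ01) (h : ∀ᵐ x ∂μ01, f x = doublingTransfer f x) :
    ∃ c : E, f =ᵐ[μ01] fun _ => c := by
  have hF : Integrable (AddCircle.liftIoc 1 0 f) AddCircle.haarAddCircle :=
    AddCircle.integrable_liftIoc (by simpa using IntegrableOn.mono_set hf Ioc_subset_Icc_self)
  have hconst := AddCircle.ae_eq_of_liftIoc_ae_eq
    (AddCircle.ae_eq_fourierCoeff_zero_of_fourierCoeff_eq_zero hF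
      fun n hn => fourierCoeff_liftIoc_eq_zero_of_ae_eq_doublingTransfer hf h hn)
  rw [zero_add, Measure.restrict_congr_set Ioc_ae_eq_Icc] at hconst
  exact ⟨_, hconst⟩

end DoublingEquation

theorem stmt18 (b : ℝ) :
    -- if b ≠ 0, the equation has no solution in L¹([0,1]) (in the a.e. sense)
    (b ≠ 0 →
      ¬∃ φ : Lp ℝ 1 μ01, ∀ᵐ x ∂μ01,
        (φ : ℝ → ℝ) x =
          1 / 2 * (φ : ℝ → ℝ) (x / 2) + 1 / 2 * (φ : ℝ → ℝ) ((x + 1) / 2) + b) ∧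
    -- if b = 0, the solutions in L¹([0,1]) are exactly the (a.e.) constant functions
    (b = 0 → ∀ φ : Lp ℝ 1 μ01,
      (∀ᵐ x ∂μ01, (φ : ℝ → ℝ) x =
          1 / 2 * (φ : ℝ → ℝ) (x / 2) + 1 / 2 * (φ : ℝ → ℝ) ((x + 1) / 2) + b) ↔
        ∃ c : ℝ, (φ : ℝ → ℝ) =ᵐ[μ01] fun _ => c) := by
  have hP (φ : ℝ → ℝ) (x : ℝ) :
      doublingTransfer φ x = 1 / 2 * φ (x / 2) + 1 / 2 * φ ((x + 1) / 2) := by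
    simp only [doublingTransfer, smul_eq_mul]; ring
  have hℂ {φ : ℝ → ℝ} {b : ℝ}
      (h : ∀ᵐ x ∂μ01, φ x = 1 / 2 * φ (x / 2) + 1 / 2 * φ ((x + 1) / 2) + b) :
      ∀ᵐ x ∂μ01, (φ x : ℂ) = doublingTransfer (fun y => (φ y : ℂ)) x + b :=
    h.mono fun x hx => by
      rw [hx]
      simp only [doublingTransfer, Complex.real_smul]
      push_cast; ring
  refine ⟨fun hb ⟨φ, hφ⟩ => hb ?_, fun hb φ => ⟨fun hφ => ?_, fun ⟨c, hc⟩ => ?_⟩⟩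
  · exact_mod_cast eq_zero_of_ae_eq_doublingTransfer_add (L1.integrable_coeFn φ).ofReal (hℂ hφ)
  · obtain ⟨c, hc⟩ := exists_ae_eq_const_of_ae_eq_doublingTransfer (L1.integrable_coeFn φ).ofReal
      ((hℂ hφ).mono fun x hx => by rwa [hb, Complex.ofReal_zero, add_zero] at hx)
    exact ⟨c.re, hc.mono fun x hx => by simpa using congr_arg Complex.re hx⟩
  · filter_upwards [ae_eq_doublingTransfer_of_ae_eq_const hc] with x hx
    rw [hb, add_zero, ← hP, ← hx]
end
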